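/- For every nonnegative integer n the following five equalities hold: (1) the number of P in S_n whose last letter is h equals the number of Q in F_n whose last step is (0,1); (2) the number of P in S_n whose last two letters are u,d equals the number of Q in F_n whose last step is (1,1); (3) the number of P in S_n whose last two letters are h,d equals the number of Q in F_n whose last step is (a,1) for some a ≥ 2; (4) the number of P in S_n whose last three letters are u,d,d equals the number of Q in F_n whose last step is (1,b) for some b ≤ 0; (5) the number of P in S_n whose last three letters are h,d,d equals the number of Q in F_n whose last step is (a,b) for some a ≥ 2 and b ≤ 0. Consequently |S_n| = |F_n|. -/

import Mathlib

/-- An `F`-step: `(0,1)` or `(a,b)` with `a ≥ 1` and `b ≤ 1`. -/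
def IsFStep (s : ℤ × ℤ) : Prop := s = (0, 1) ∨ (1 ≤ s.1 ∧ s.2 ≤ 1)

/-- An `F`-path: a sequence of `F`-steps whose prefix sums satisfy
`a_1 + ⋯ + a_i ≤ b_1 + ⋯ + b_i`. -/
def IsFPath (Q : List (ℤ × ℤ)) : Prop :=
  (∀ s ∈ Q, IsFStep s) ∧
  ∀ i : ℕ, ((Q.take i).map Prod.fst).sum ≤ ((Q.take i).map Prod.snd).sum

/-- The set of `F`-paths of length `n`. -/
def FPaths (n : ℕ) : Set (List (ℤ × ℤ)) := {Q | Q.length = n ∧ IsFPath Q}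

def fheight (Q : List (ℤ × ℤ)) : ℤ := (Q.map Prod.snd).sum - (Q.map Prod.fst).sum

def fnorth (Q : List (ℤ × ℤ)) : ℕ := Q.countP (fun s => decide (s = ((0 : ℤ), (1 : ℤ))))

def faone (Q : List (ℤ × ℤ)) : ℕ := Q.countP (fun s => decide (s.1 = 1))

def fbone (Q : List (ℤ × ℤ)) : ℕ := Q.countP (fun s => decide (s.2 = 1))

/-- Steps of a Schröder path. -/
inductive SStep : Type
  | u | d | h
deriving DecidableEq

/-- The width of a Schröder step. -/
def swidth : SStep → ℕ
  | .u => 1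
  | .d => 1
  | .h => 2

/-- The height-change of a Schröder step. -/
def shc : SStep → ℤ
  | .u => 1
  | .d => -1
  | .h => 0

/-- A Schröder path of semilength `n`. -/
def IsSchroder (n : ℕ) (P : List SStep) : Prop :=
  (P.map swidth).sum = 2 * n ∧ (P.map shc).sum = 0 ∧
  ∀ i : ℕ, 0 ≤ ((P.take i).map shc).sum

/-- Schröder paths of semilength `n` without triple descents. -/
def SchP (n : ℕ) : Set (List SStep) :=
  {P | IsSchroder n P ∧ ¬ [SStep.d, SStep.d, SStep.d] <:+: P}

/-- Number of `h` letters preceded by a prefix of total height-change `0`. -/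
noncomputable def scomp (P : List SStep) : ℕ :=
  Set.ncard {i : ℕ | P[i]? = some SStep.h ∧ ((P.take i).map shc).sum = 0}

/-- Number of `h` letters plus number of double descents. -/
noncomputable def shdd (P : List SStep) : ℕ :=
  P.countP (fun s => decide (s = SStep.h)) +
    Set.ncard {i : ℕ | P[i]? = some SStep.d ∧ P[i + 1]? = some SStep.d}

/-- Number of peaks `ud`. -/
noncomputable def speak (P : List SStep) : ℕ :=
  Set.ncard {i : ℕ | P[i]? = some SStep.u ∧ P[i + 1]? = some SStep.d}

/-- Steps of a bicolored Dyck path: up, red down, black down. -/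
inductive BStep : Type
  | u | dR | dB
deriving DecidableEq

/-- A restricted bicolored Dyck path of semilength `n`:
`u^{i_1} dR^{j_1} dB^{k_1} ⋯ u^{i_{ℓ-1}} dR^{j_{ℓ-1}} dB^{k_{ℓ-1}} u^{i_ℓ} dR^{j_ℓ}`
with positive `i`'s and `k`'s, `∑ i = n`, `∑ j + ∑ k = n`, and every prefix having
at least as many `u`'s as down steps. -/
def IsRBD (n : ℕ) (B : List BStep) : Prop :=
  (∃ (blocks : List (ℕ × ℕ × ℕ)) (iL jL : ℕ),
    (∀ t ∈ blocks, 1 ≤ t.1 ∧ 1 ≤ t.2.2) ∧ 1 ≤ iL ∧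
    B = (blocks.map (fun t =>
        List.replicate t.1 BStep.u ++ List.replicate t.2.1 BStep.dR ++
          List.replicate t.2.2 BStep.dB)).flatten ++
        (List.replicate iL BStep.u ++ List.replicate jL BStep.dR) ∧
    (blocks.map (fun t => t.1)).sum + iL = n ∧
    (blocks.map (fun t => t.2.1)).sum + jL + (blocks.map (fun t => t.2.2)).sum = n) ∧
  ∀ i : ℕ, (B.take i).countP (fun s => decide (s ≠ BStep.u)) ≤
    (B.take i).countP (fun s => decide (s = BStep.u))

/-- The length of the final run of red down steps. -/
def blast (B : List BStep) : ℕ := (B.reverse.takeWhile (fun s => decide (s = BStep.dR))).length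

/-- The number of double ascents `uu`. -/
noncomputable def bdasc (B : List BStep) : ℕ :=
  Set.ncard {i : ℕ | B[i]? = some BStep.u ∧ B[i + 1]? = some BStep.u}

/-- The number of occurrences of `u dB u` or `dR dB u`. -/
noncomputable def bbval (B : List BStep) : ℕ :=
  Set.ncard {i : ℕ | (B[i]? = some BStep.u ∨ B[i]? = some BStep.dR) ∧
    B[i + 1]? = some BStep.dB ∧ B[i + 2]? = some BStep.u}

/-- `π : ℕ → ℕ` encodes a permutation of `{1,…,N}`, with value `0` outside
(in particular `π 0 = 0`). -/
def IsPermOn (N : ℕ) (π : ℕ → ℕ) : Prop :=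
  Set.BijOn π (Set.Icc 1 N) (Set.Icc 1 N) ∧ ∀ i, i ∉ Set.Icc 1 N → π i = 0

/-- `π` contains the pattern given by the word `σ`. -/
def ContainsPat (N : ℕ) (π : ℕ → ℕ) (σ : List ℕ) : Prop :=
  ∃ f : Fin σ.length → ℕ, StrictMono f ∧ (∀ t, f t ∈ Set.Icc 1 N) ∧
    ∀ s t : Fin σ.length, π (f s) < π (f t) ↔ σ.get s < σ.get t

/-- Permutations of `{1,…,N}` avoiding the patterns `2341`, `2431` and `3241`. -/
def PermSet (N : ℕ) : Set (ℕ → ℕ) :=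
  {π | IsPermOn N π ∧ ¬ContainsPat N π [2, 3, 4, 1] ∧ ¬ContainsPat N π [2, 4, 3, 1] ∧
    ¬ContainsPat N π [3, 2, 4, 1]}

/-- `block(π)`: the number of `j ∈ {1,…,N}` with `{π(1),…,π(j)} = {1,…,j}`. -/
noncomputable def blockStat (N : ℕ) (π : ℕ → ℕ) : ℕ :=
  Set.ncard {j : ℕ | 1 ≤ j ∧ j ≤ N ∧ π '' Set.Icc 1 j = Set.Icc 1 j}

/-- `asc(π)`: the number of ascents of `π`. -/
noncomputable def ascStat (N : ℕ) (π : ℕ → ℕ) : ℕ :=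
  Set.ncard {i : ℕ | 1 ≤ i ∧ i + 1 ≤ N ∧ π i < π (i + 1)}

/-- `crit(π)`: the number of critical entries of `π`. -/
noncomputable def critStat (N : ℕ) (π : ℕ → ℕ) : ℕ :=
  Set.ncard {i : ℕ | 1 ≤ i ∧ i ≤ N ∧ ∀ j k : ℕ, 1 ≤ j → j < i → i < k → k ≤ N →
    π j < π i → π k < π i → π j < π k}

/-- An inversion sequence: `0 ≤ e_i < i` (1-indexed). -/
def IsInvSeq (e : List ℕ) : Prop := ∀ i : Fin e.length, e.get i < i.val + 1

/-- `e` contains the pattern `101`. -/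
def Contains101 (e : List ℕ) : Prop :=
  ∃ i j k : Fin e.length, i < j ∧ j < k ∧ e.get j < e.get i ∧ e.get i = e.get k

/-- `e` contains the pattern `102`. -/
def Contains102 (e : List ℕ) : Prop :=
  ∃ i j k : Fin e.length, i < j ∧ j < k ∧ e.get j < e.get i ∧ e.get i < e.get k

/-- `e` contains the pattern `021`. -/
def Contains021 (e : List ℕ) : Prop :=
  ∃ i j k : Fin e.length, i < j ∧ j < k ∧ e.get i < e.get k ∧ e.get k < e.get j

/-- Inversion sequences of length `n` avoiding `101` and `102`. -/
def ISet (n : ℕ) : Set (List ℕ) :=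
  {e | e.length = n ∧ IsInvSeq e ∧ ¬Contains101 e ∧ ¬Contains102 e}

/-- Inversion sequences of length `n` avoiding `101` and `021`. -/
def JSet (n : ℕ) : Set (List ℕ) :=
  {e | e.length = n ∧ IsInvSeq e ∧ ¬Contains101 e ∧ ¬Contains021 e}

/-- The largest entry of `e` (`0` for the empty sequence). -/
def maxVal (e : List ℕ) : ℕ := e.foldr max 0

/-- The largest (1-indexed) position of the maximal entry of `e`. -/
def maxid (e : List ℕ) : ℕ := e.length - e.reverse.idxOf (maxVal e)

/-- `e` with the entry at position `maxid e` removed. -/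
def ehat (e : List ℕ) : List ℕ := e.eraseIdx (maxid e - 1)

/-- `omi(e)`: the number of `i ∈ {1,…,n}` not occurring as an entry of `e`. -/
noncomputable def omi (e : List ℕ) : ℕ := Set.ncard {i : ℕ | 1 ≤ i ∧ i ≤ e.length ∧ i ∉ e}

/-- `cons(e)`: the number of `i ∈ {1,…,n-1}` such that both `i-1` and `i` occur in `e`. -/
noncomputable def consStat (e : List ℕ) : ℕ :=
  Set.ncard {i : ℕ | 1 ≤ i ∧ i + 1 ≤ e.length ∧ (i - 1) ∈ e ∧ i ∈ e}

/-- `first(e)`: the length of the initial run of zeros of `e`. -/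
def firstStat (e : List ℕ) : ℕ := (e.takeWhile (fun v => decide (v = 0))).length

/-- `single(e)`: the number of positive integers occurring exactly once in `e`. -/
noncomputable def singleStat (e : List ℕ) : ℕ := Set.ncard {v : ℕ | 1 ≤ v ∧ e.count v = 1}

/-- The binomial coefficient `C(p,q)`, interpreted as `0` unless `0 ≤ q ≤ p`. -/
def C (p q : ℤ) : ℤ := if 0 ≤ q ∧ q ≤ p then (p.toNat.choose q.toNat : ℤ) else 0

/-!
Both sides are counted through the binomial moments `L(m, k) = ∑_{Q ∈ F_m} C(height Q, k)`,
where the height of an F-path is `∑ bᵢ - ∑ aᵢ`.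

After an F-path of height `H`, the admissible steps `(0,1)`, `(1,1)`, `(a,1)` with `a ≥ 2`,
`(1,b)` with `b ≤ 0`, and `(a,b)` with `a ≥ 2, b ≤ 0` number `1, 1, H, H, C(H,2)`, i.e.
`C(H,k)` for `k = 0, 0, 1, 1, 2`; so the five classes of F-paths of length `m + 1` have sizes
`L(m,k)`. A nonempty Schröder prefix without triple descents ends in exactly one of the blocks
`u, h, ud, hd, udd, hdd`, so a path of semilength `m + 1` ending in `h, ud, hd, udd, hdd` is a
prefix of width `2m - k` ending at height `k` (same `k`'s) followed by that block.

It remains to show that there are `L(m,k)` such prefixes. Removing the last block, resp. summing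
`C(H - a + b, k)` over the admissible last steps (two hockey-stick sums), shows that both
quantities satisfy `X(m+1,k) = X(m,k-1) + 2 X(m,k) + 2 X(m,k+1) + X(m,k+2)`.
-/

namespace List

variable {α : Type*}

theorem infix_append_cons_iff {l L R : List α} {x : α} (hx : x ∉ l) :
    l <:+: L ++ x :: R ↔ l <:+: L ∨ l <:+: R := by
  refine ⟨fun ⟨s, t, h⟩ => ?_, fun h => h.elim (·.trans infix_append_left)
    (·.trans ((suffix_cons x R).isInfix.trans infix_append_right))⟩
  rw [append_assoc, append_eq_append_iff] at h
  rcases h with ⟨a, rfl, h⟩ | ⟨c, rfl, h⟩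
  · rcases append_eq_append_iff.mp h with ⟨b, rfl, -⟩ | ⟨_ | ⟨y, c⟩, rfl, hc⟩
    · exact .inl ⟨s, b, by simp⟩
    · exact .inl ⟨s, [], by simp⟩
    · obtain ⟨rfl, -⟩ := cons.inj hc
      exact absurd (mem_append_right a mem_cons_self) hx
  · rcases c with _ | ⟨y, c⟩
    · rcases l with _ | ⟨z, l⟩
      · exact .inr nil_infix
      · obtain ⟨rfl, -⟩ := cons.inj h
        exact absurd mem_cons_self hx
    · obtain ⟨-, rfl⟩ := cons.inj h
      exact .inr ⟨c, t, by simp⟩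

end List

section PrefixSums

variable {α : Type*} (f : α → ℤ)

def PrefixSumsNonneg (L : List α) : Prop := ∀ i, 0 ≤ ((L.take i).map f).sum

variable {f}

theorem PrefixSumsNonneg.sum_nonneg {L : List α} (h : PrefixSumsNonneg f L) :
    0 ≤ (L.map f).sum := by
  simpa using h L.length

theorem prefixSumsNonneg_append {L M : List α} :
    PrefixSumsNonneg f (L ++ M) ↔
      PrefixSumsNonneg f L ∧ ∀ j, 0 ≤ (L.map f).sum + ((M.take j).map f).sum := by
  simp only [PrefixSumsNonneg, List.take_append, List.map_append, List.sum_append]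
  refine ⟨fun h => ⟨fun i => ?_, fun j => ?_⟩, fun ⟨hL, hM⟩ i => ?_⟩
  · rcases le_total i L.length with hi | hi
    · simpa [Nat.sub_eq_zero_of_le hi] using h i
    · simpa [List.take_of_length_le hi] using h L.length
  · simpa [List.take_of_length_le (Nat.le_add_right L.length j)] using h (L.length + j)
  · rcases le_total i L.length with hi | hi
    · simpa [Nat.sub_eq_zero_of_le hi] using hL i
    · simpa [List.take_of_length_le hi] using hM (i - L.length)

theorem prefixSumsNonneg_concat {L : List α} {x : α} :
    PrefixSumsNonneg f (L ++ [x]) ↔ PrefixSumsNonneg f L ∧ 0 ≤ (L.map f).sum + f x := by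
  rw [prefixSumsNonneg_append]
  refine ⟨fun ⟨hL, h⟩ => ⟨hL, by simpa using h 1⟩, fun ⟨hL, h⟩ => ⟨hL, fun j => ?_⟩⟩
  rcases j with _ | j
  · simpa using hL.sum_nonneg
  · simpa using h

end PrefixSums

theorem Set.ncard_biUnion_image_append {α : Type*} {B : List (List α)}
    (hB : B.Pairwise fun b c => ¬ b <:+ c ∧ ¬ c <:+ b) {S : List α → Set (List α)}
    (hS : ∀ b ∈ B, (S b).Finite) :
    (⋃ b ∈ B, (· ++ b) '' S b).ncard = (B.map fun b => (S b).ncard).sum := by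
  induction B with
  | nil => simp
  | cons b B ih =>
    rw [List.pairwise_cons] at hB
    have hfin : (⋃ c ∈ B, (· ++ c) '' S c).Finite :=
      B.finite_toSet.biUnion fun c hc => (hS c (List.mem_cons_of_mem b hc)).image _
    have hdisj : Disjoint ((· ++ b) '' S b) (⋃ c ∈ B, (· ++ c) '' S c) := by
      rw [Set.disjoint_left]
      rintro _ ⟨P, -, rfl⟩ hP
      simp only [Set.mem_iUnion, Set.mem_image] at hP
      obtain ⟨c, hc, Q, -, hQ⟩ := hP
      have := List.suffix_or_suffix_of_suffix (List.suffix_append P b)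
        (hQ ▸ List.suffix_append Q c)
      have := hB.1 c hc
      tauto
    simp only [List.mem_cons, Set.iUnion_iUnion_eq_or_left, List.map_cons, List.sum_cons]
    rw [Set.ncard_union_eq hdisj ((hS b List.mem_cons_self).image _) hfin,
      Set.ncard_image_of_injective _ (List.append_left_injective b),
      ih hB.2 fun c hc => hS c (List.mem_cons_of_mem b hc)]

open Finset in
theorem Nat.sum_range_reflect_choose (n k : ℕ) :
    ∑ i ∈ range n, (n - 1 - i).choose k = n.choose (k + 1) := by
  rw [Finset.sum_range_reflect (fun i => i.choose k) n]
  induction n with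
  | zero => simp
  | succ n ih => rw [Finset.sum_range_succ, ih, Nat.choose_succ_succ', add_comm]

def sWidth (P : List SStep) : ℤ := (P.map fun x => (swidth x : ℤ)).sum

def sHeight (P : List SStep) : ℤ := (P.map shc).sum

/-- Widths and heights are integers so that `ncard_schPrefix` can subtract freely; the set is
empty for negative width or height. -/
def SchPrefix (w h : ℤ) : Set (List SStep) :=
  {P | PrefixSumsNonneg shc P ∧ ¬ [SStep.d, SStep.d, SStep.d] <:+: P ∧
    sWidth P = w ∧ sHeight P = h}

def lastBlocks : List (List SStep) :=
  [[.u], [.h], [.u, .d], [.h, .d], [.u, .d, .d], [.h, .d, .d]]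

instance : Fintype SStep := ⟨{.u, .d, .h}, fun x => by cases x <;> simp⟩

theorem schP_eq_schPrefix (n : ℕ) : SchP n = SchPrefix (2 * n) 0 := by
  ext P
  have hw : (P.map swidth).sum = 2 * n ↔ sWidth P = 2 * n := by
    simp [sWidth, ← Nat.cast_inj (R := ℤ), Nat.cast_list_sum, Function.comp_def]
  simp only [SchP, IsSchroder, SchPrefix, PrefixSumsNonneg, sHeight, hw, Set.mem_ofPred_eq]
  tauto

theorem sWidth_append (P Q : List SStep) : sWidth (P ++ Q) = sWidth P + sWidth Q := by
  simp [sWidth]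

theorem sHeight_append (P Q : List SStep) : sHeight (P ++ Q) = sHeight P + sHeight Q := by
  simp [sHeight]

theorem length_le_sWidth (P : List SStep) : (P.length : ℤ) ≤ sWidth P := by
  induction P with
  | nil => simp [sWidth]
  | cons x P ih =>
    have : (1 : ℤ) ≤ swidth x := by cases x <;> simp [swidth]
    simp only [sWidth, List.map_cons, List.sum_cons, List.length_cons] at ih ⊢
    omega

theorem SchPrefix.finite (w h : ℤ) : (SchPrefix w h).Finite :=
  (List.finite_length_le SStep w.toNat).subset fun P hP => by
    have := length_le_sWidth P
    have := hP.2.2.1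
    simp only [Set.mem_ofPred_eq]
    omega

theorem schPrefix_eq_empty_of_neg_width {w : ℤ} (hw : w < 0) (h : ℤ) : SchPrefix w h = ∅ :=
  Set.eq_empty_of_forall_notMem fun P hP => by
    have := length_le_sWidth P
    have := hP.2.2.1
    omega

theorem schPrefix_eq_empty_of_neg_height (w : ℤ) {h : ℤ} (hh : h < 0) : SchPrefix w h = ∅ :=
  Set.eq_empty_of_forall_notMem fun P hP => by
    have := hP.1.sum_nonneg
    have := hP.2.2.2
    simp only [sHeight] at this
    omega

theorem ddd_infix_append_iff {P b : List SStep} (hb : b ∈ lastBlocks) :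
    [SStep.d, SStep.d, SStep.d] <:+: P ++ b ↔ [SStep.d, SStep.d, SStep.d] <:+: P := by
  obtain ⟨x, D, rfl, hx, hD⟩ : ∃ x D, b = x :: D ∧ x ≠ SStep.d ∧ D.length < 3 := by
    simp only [lastBlocks, List.mem_cons, List.not_mem_nil, or_false] at hb
    rcases hb with rfl | rfl | rfl | rfl | rfl | rfl <;> exact ⟨_, _, rfl, by decide, by decide⟩
  rw [List.infix_append_cons_iff (by simpa using hx)]
  exact or_iff_left fun h => by simpa using hD.trans_le h.length_le

theorem min_le_sHeight_take {b : List SStep} (hb : b ∈ lastBlocks) (j : ℕ) :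
    min 0 (sHeight b) ≤ sHeight (b.take j) := by
  simp only [lastBlocks, List.mem_cons, List.not_mem_nil, or_false] at hb
  rcases hb with rfl | rfl | rfl | rfl | rfl | rfl <;>
    rcases j with _ | _ | _ | _ | j <;> simp [sHeight, shc]

theorem append_mem_schPrefix_iff {P b : List SStep} (hb : b ∈ lastBlocks) {w h : ℤ} :
    P ++ b ∈ SchPrefix w h ↔ P ∈ SchPrefix (w - sWidth b) (h - sHeight b) ∧ 0 ≤ h := by
  simp only [SchPrefix, Set.mem_ofPred_eq, prefixSumsNonneg_append, ddd_infix_append_iff hb,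
    sWidth_append, sHeight_append]
  constructor
  · rintro ⟨⟨hP, hb'⟩, hd, rfl, rfl⟩
    exact ⟨⟨hP, hd, by ring, by ring⟩, by simpa [sHeight] using hb' b.length⟩
  · rintro ⟨⟨hP, hd, hw, hh⟩, h0⟩
    refine ⟨⟨hP, fun j => ?_⟩, hd, by omega, by omega⟩
    have := min_le_sHeight_take hb j
    have := hP.sum_nonneg
    simp only [sHeight] at *
    omega

/-- `P` cannot start with `d` (its first prefix sum would be `-1`) and has no `ddd`, so a case
analysis on its last three letters finds the block. -/
theorem exists_suffix_of_mem_schPrefix {P : List SStep} {w h : ℤ} (hP : P ∈ SchPrefix w h)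
    (hne : P ≠ []) : ∃ b ∈ lastBlocks, b <:+ P := by
  have hstart : ∀ Q, P ≠ SStep.d :: Q := by
    rintro Q rfl
    simpa [PrefixSumsNonneg, shc] using hP.1 1
  obtain ⟨R, rfl⟩ : ∃ R, P = R.reverse := ⟨P.reverse, P.reverse_reverse.symm⟩
  have hddd : ¬ [SStep.d, SStep.d, SStep.d] <+: R := fun h => hP.2.1 (by
    simpa using h.reverse.isInfix)
  simp only [lastBlocks, List.mem_cons, List.not_mem_nil, or_false, exists_eq_or_imp,
    exists_eq_left, ← List.reverse_prefix, List.reverse_reverse]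
  rcases R with _ | ⟨x, _ | ⟨y, _ | ⟨z, R⟩⟩⟩
  · simp at hne
  · cases x <;> simp_all
  · cases x <;> cases y <;> simp_all
  · cases x <;> cases y <;> cases z <;> simp_all

theorem schPrefix_eq_union {w h : ℤ} (hh : 0 ≤ h) :
    SchPrefix w h = {P | P = [] ∧ w = 0 ∧ h = 0} ∪
      ⋃ b ∈ lastBlocks, (· ++ b) '' SchPrefix (w - sWidth b) (h - sHeight b) := by
  ext P
  simp only [Set.mem_union, Set.mem_ofPred_eq, Set.mem_iUnion, Set.mem_image, exists_prop]
  constructor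
  · intro hP
    by_cases hne : P = []
    · subst hne
      obtain ⟨-, -, hw, hh⟩ := hP
      exact .inl ⟨rfl, hw.symm, hh.symm⟩
    · obtain ⟨b, hb, P', rfl⟩ := exists_suffix_of_mem_schPrefix hP hne
      exact .inr ⟨b, hb, P', ((append_mem_schPrefix_iff hb).1 hP).1, rfl⟩
  · rintro (⟨rfl, rfl, rfl⟩ | ⟨b, hb, P', hP', rfl⟩)
    · exact ⟨fun i => by simp, by simp, rfl, rfl⟩
    · exact (append_mem_schPrefix_iff hb).2 ⟨hP', hh⟩

theorem ncard_schPrefix {w h : ℤ} (hh : 0 ≤ h) :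
    (SchPrefix w h).ncard = (if w = 0 ∧ h = 0 then 1 else 0) +
      (SchPrefix (w - 1) (h - 1)).ncard + 2 * (SchPrefix (w - 2) h).ncard +
      2 * (SchPrefix (w - 3) (h + 1)).ncard + (SchPrefix (w - 4) (h + 2)).ncard := by
  have hnil : {P : List SStep | P = [] ∧ w = 0 ∧ h = 0}.ncard =
      if w = 0 ∧ h = 0 then 1 else 0 := by
    split_ifs with hwh <;> simp [hwh]
  have hdisj : Disjoint {P : List SStep | P = [] ∧ w = 0 ∧ h = 0}
      (⋃ b ∈ lastBlocks, (· ++ b) '' SchPrefix (w - sWidth b) (h - sHeight b)) := by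
    rw [Set.disjoint_left]
    rintro _ ⟨rfl, -⟩ hmem
    simp [lastBlocks] at hmem
  rw [schPrefix_eq_union hh, Set.ncard_union_eq hdisj
      ((Set.finite_singleton []).subset fun P hP => hP.1)
      (lastBlocks.finite_toSet.biUnion fun b _ => (SchPrefix.finite _ _).image _),
    hnil, Set.ncard_biUnion_image_append (by decide) fun _ _ => SchPrefix.finite _ _]
  simp only [lastBlocks, sWidth, sHeight, swidth, shc, List.map_cons, List.map_nil, List.sum_cons,
    List.sum_nil]
  ring_nf

open Finset

instance : DecidablePred IsFStep := fun s => by unfold IsFStep; infer_instance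

noncomputable def fSteps (H : ℕ) : Finset (ℤ × ℤ) :=
  (Icc (0 : ℤ) (H + 1) ×ˢ Icc (-(H : ℤ)) 1).filter fun s => IsFStep s ∧ s.1 - s.2 ≤ H

theorem mem_fSteps {H : ℕ} {s : ℤ × ℤ} : s ∈ fSteps H ↔ IsFStep s ∧ s.1 - s.2 ≤ H := by
  simp only [fSteps, mem_filter, mem_product, mem_Icc, IsFStep, Prod.ext_iff]
  omega

theorem sum_map_snd_sub_fst (Q : List (ℤ × ℤ)) :
    (Q.map fun s => s.2 - s.1).sum = (Q.map Prod.snd).sum - (Q.map Prod.fst).sum := by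
  induction Q with
  | nil => simp
  | cons s Q ih => simp only [List.map_cons, List.sum_cons, ih]; ring

theorem isFPath_iff {Q : List (ℤ × ℤ)} :
    IsFPath Q ↔ (∀ s ∈ Q, IsFStep s) ∧ PrefixSumsNonneg (fun s => s.2 - s.1) Q := by
  simp only [IsFPath, PrefixSumsNonneg, sum_map_snd_sub_fst, sub_nonneg]

theorem isFPath_concat {Q : List (ℤ × ℤ)} {s : ℤ × ℤ} :
    IsFPath (Q ++ [s]) ↔ IsFPath Q ∧ IsFStep s ∧ s.1 - s.2 ≤ fheight Q := by
  simp only [isFPath_iff, prefixSumsNonneg_concat, fheight, ← sum_map_snd_sub_fst,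
    List.mem_append, List.mem_singleton]
  constructor
  · rintro ⟨hs, hP, h⟩
    exact ⟨⟨fun t ht => hs t (.inl ht), hP⟩, hs s (.inr rfl), by linarith⟩
  · rintro ⟨⟨hs, hP⟩, hst, h⟩
    exact ⟨fun t ht => ht.elim (hs t) (· ▸ hst), hP, by linarith⟩

theorem fheight_nonneg {Q : List (ℤ × ℤ)} (hQ : IsFPath Q) : 0 ≤ fheight Q := by
  rw [fheight, ← sum_map_snd_sub_fst]
  exact (isFPath_iff.1 hQ).2.sum_nonneg

theorem fheight_concat (Q : List (ℤ × ℤ)) (s : ℤ × ℤ) :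
    fheight (Q ++ [s]) = fheight Q - (s.1 - s.2) := by
  simp only [fheight, List.map_append, List.map_cons, List.map_nil, List.sum_append,
    List.sum_cons, List.sum_nil]
  ring

noncomputable def fPathFinset : ℕ → Finset (List (ℤ × ℤ))
  | 0 => {[]}
  | m + 1 => (fPathFinset m).biUnion fun Q => (fSteps (fheight Q).toNat).image (Q ++ [·])

theorem coe_fPathFinset (m : ℕ) : (fPathFinset m : Set (List (ℤ × ℤ))) = FPaths m := by
  induction m with
  | zero =>
    ext Q
    simp only [fPathFinset, coe_singleton, Set.mem_singleton_iff, FPaths, Set.mem_ofPred_eq,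
      List.length_eq_zero_iff]
    exact ⟨fun h => ⟨h, h ▸ by simp [IsFPath]⟩, And.left⟩
  | succ m ih =>
    ext Q
    simp only [fPathFinset, coe_biUnion, coe_image, Set.mem_iUnion, Set.mem_image, mem_coe, ih]
    constructor
    · rintro ⟨Q', ⟨hlen, hQ'⟩, s, hs, rfl⟩
      rw [mem_fSteps, Int.toNat_of_nonneg (fheight_nonneg hQ')] at hs
      exact ⟨by simp [hlen], isFPath_concat.2 ⟨hQ', hs⟩⟩
    · rintro ⟨hlen, hQ⟩
      obtain ⟨Q', s, rfl⟩ := (List.eq_nil_or_concat Q).resolve_left (by rintro rfl; simp at hlen)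
      rw [List.concat_eq_append] at hlen hQ ⊢
      rw [isFPath_concat] at hQ
      refine ⟨Q', ⟨by simpa using hlen, hQ.1⟩, s, ?_, rfl⟩
      rw [mem_fSteps, Int.toNat_of_nonneg (fheight_nonneg hQ.1)]
      exact hQ.2

theorem sum_fPathFinset_succ {M : Type*} [AddCommMonoid M] (g : List (ℤ × ℤ) → M) (m : ℕ) :
    ∑ Q ∈ fPathFinset (m + 1), g Q =
      ∑ Q ∈ fPathFinset m, ∑ s ∈ fSteps (fheight Q).toNat, g (Q ++ [s]) := by
  rw [fPathFinset, sum_biUnion]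
  · exact sum_congr rfl fun Q _ => sum_image fun s _ t _ h => by simpa using h
  · intro Q _ Q' _ hne
    simp only [Function.onFun, disjoint_left, mem_image]
    rintro _ ⟨s, -, rfl⟩ ⟨t, -, h⟩
    exact hne (List.append_inj' h rfl).1.symm

def wideHighSteps (H : ℕ) : Finset (ℤ × ℤ) := (range H).image fun i : ℕ => ((i : ℤ) + 2, 1)

def narrowLowSteps (H : ℕ) : Finset (ℤ × ℤ) := (range H).image fun j : ℕ => (1, -(j : ℤ))

def wideLowSteps (H : ℕ) : Finset (ℤ × ℤ) :=
  ((range H).sigma fun i => range (H - 1 - i)).image fun p => ((p.1 : ℤ) + 2, -(p.2 : ℤ))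

section StepClasses

variable {H : ℕ} {s : ℤ × ℤ}

theorem mem_wideHighSteps : s ∈ wideHighSteps H ↔ 2 ≤ s.1 ∧ s.2 = 1 ∧ s.1 - s.2 ≤ H := by
  simp only [wideHighSteps, mem_image, mem_range, Prod.ext_iff]
  refine ⟨?_, fun h => ⟨(s.1 - 2).toNat, by omega, by omega, h.2.1.symm⟩⟩
  rintro ⟨i, hi, h1, h2⟩
  omega

theorem mem_narrowLowSteps : s ∈ narrowLowSteps H ↔ s.1 = 1 ∧ s.2 ≤ 0 ∧ s.1 - s.2 ≤ H := by
  simp only [narrowLowSteps, mem_image, mem_range, Prod.ext_iff]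
  refine ⟨?_, fun h => ⟨(-s.2).toNat, by omega, h.1.symm, by omega⟩⟩
  rintro ⟨j, hj, h1, h2⟩
  omega

theorem mem_wideLowSteps : s ∈ wideLowSteps H ↔ 2 ≤ s.1 ∧ s.2 ≤ 0 ∧ s.1 - s.2 ≤ H := by
  simp only [wideLowSteps, mem_image, mem_sigma, mem_range, Sigma.exists, Prod.ext_iff]
  refine ⟨?_, fun h => ⟨(s.1 - 2).toNat, (-s.2).toNat, by omega, by omega, by omega⟩⟩
  rintro ⟨i, j, ⟨hi, hj⟩, h1, h2⟩
  omega

end StepClasses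

theorem fSteps_eq (H : ℕ) : fSteps H =
    insert (0, 1) (insert (1, 1) (wideHighSteps H ∪ (narrowLowSteps H ∪ wideLowSteps H))) := by
  ext s
  simp only [mem_fSteps, IsFStep, mem_insert, mem_union, mem_wideHighSteps, mem_narrowLowSteps,
    mem_wideLowSteps, Prod.ext_iff]
  omega

theorem sum_wideHighSteps_choose (H k : ℕ) :
    ∑ s ∈ wideHighSteps H, ((H : ℤ) - (s.1 - s.2)).toNat.choose k = H.choose (k + 1) := by
  rw [wideHighSteps, sum_image fun i _ j _ h => by simpa using h, ← Nat.sum_range_reflect_choose]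
  refine sum_congr rfl fun i hi => congrArg (Nat.choose · k) ?_
  rw [mem_range] at hi
  omega

theorem sum_narrowLowSteps_choose (H k : ℕ) :
    ∑ s ∈ narrowLowSteps H, ((H : ℤ) - (s.1 - s.2)).toNat.choose k = H.choose (k + 1) := by
  rw [narrowLowSteps, sum_image fun i _ j _ h => by simpa using h, ← Nat.sum_range_reflect_choose]
  refine sum_congr rfl fun i hi => congrArg (Nat.choose · k) ?_
  rw [mem_range] at hi
  omega

theorem sum_wideLowSteps_choose (H k : ℕ) :
    ∑ s ∈ wideLowSteps H, ((H : ℤ) - (s.1 - s.2)).toNat.choose k = H.choose (k + 2) := by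
  rw [wideLowSteps, sum_image fun ⟨i, j⟩ _ ⟨i', j'⟩ _ h => by
      obtain ⟨rfl, rfl⟩ : i = i' ∧ j = j' := by simpa using h
      rfl,
    sum_sigma, ← Nat.sum_range_reflect_choose]
  refine sum_congr rfl fun i hi => ?_
  rw [← Nat.sum_range_reflect_choose]
  refine sum_congr rfl fun j hj => congrArg (Nat.choose · k) ?_
  rw [mem_range] at hi hj
  dsimp only
  omega

theorem sum_fSteps_choose (H k : ℕ) :
    ∑ s ∈ fSteps H, ((H : ℤ) - (s.1 - s.2)).toNat.choose k =
      (H + 1).choose k + H.choose k + 2 * H.choose (k + 1) + H.choose (k + 2) := by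
  rw [fSteps_eq, sum_insert, sum_insert, sum_union, sum_union, sum_wideHighSteps_choose,
    sum_narrowLowSteps_choose, sum_wideLowSteps_choose]
  · have h₀ : ((H : ℤ) - ((0 : ℤ) - 1)).toNat = H + 1 := by omega
    have h₁ : ((H : ℤ) - ((1 : ℤ) - 1)).toNat = H := by omega
    rw [h₀, h₁]
    ring
  all_goals
    simp only [disjoint_left, mem_insert, mem_union, mem_wideHighSteps, mem_narrowLowSteps,
      mem_wideLowSteps, Prod.ext_iff]
    try intro s
    omega

noncomputable def heightBinomialSum (m k : ℕ) : ℕ :=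
  ∑ Q ∈ fPathFinset m, (fheight Q).toNat.choose k

theorem fheight_nonneg_of_mem {m : ℕ} {Q : List (ℤ × ℤ)} (hQ : Q ∈ fPathFinset m) :
    0 ≤ fheight Q := by
  rw [← mem_coe, coe_fPathFinset] at hQ
  exact fheight_nonneg hQ.2

theorem heightBinomialSum_succ (m k : ℕ) :
    heightBinomialSum (m + 1) k =
      (if k = 0 then 0 else heightBinomialSum m (k - 1)) + 2 * heightBinomialSum m k +
        2 * heightBinomialSum m (k + 1) + heightBinomialSum m (k + 2) := by
  have hstep : ∀ Q ∈ fPathFinset m,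
      ∑ s ∈ fSteps (fheight Q).toNat, (fheight (Q ++ [s])).toNat.choose k =
        ((fheight Q).toNat + 1).choose k + (fheight Q).toNat.choose k +
          2 * (fheight Q).toNat.choose (k + 1) + (fheight Q).toNat.choose (k + 2) := by
    intro Q hQ
    rw [← sum_fSteps_choose, Int.toNat_of_nonneg (fheight_nonneg_of_mem hQ)]
    simp only [fheight_concat]
  rw [heightBinomialSum, sum_fPathFinset_succ, sum_congr rfl hstep]
  cases k with
  | zero =>
    simp only [Nat.choose_zero_right, sum_add_distrib, ← mul_sum, heightBinomialSum, ↓reduceIte]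
    ring
  | succ k =>
    simp only [Nat.choose_succ_succ' _ k, sum_add_distrib, ← mul_sum, heightBinomialSum,
      if_neg k.succ_ne_zero, Nat.add_sub_cancel]
    ring

theorem ncard_schPrefix_eq_heightBinomialSum (m k : ℕ) {w : ℤ} (hw : w + k = 2 * m) :
    (SchPrefix w k).ncard = heightBinomialSum m k := by
  induction m generalizing k w with
  | zero =>
    have hneg : ∀ d : ℤ, 0 < d → ∀ h, (SchPrefix (w - d) h).ncard = 0 := fun d hd h => by
      rw [schPrefix_eq_empty_of_neg_width (by omega), Set.ncard_empty]
    rw [ncard_schPrefix (by positivity), hneg 1 one_pos, hneg 2 two_pos, hneg 3 three_pos,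
      hneg 4 four_pos]
    have hnil : w = 0 ∧ (k : ℤ) = 0 ↔ k = 0 := by omega
    simp only [hnil, heightBinomialSum, fPathFinset, sum_singleton, fheight, List.map_nil,
      List.sum_nil, sub_self, Int.toNat_zero]
    rcases k with _ | k <;> simp
  | succ m ih =>
    have hu : (SchPrefix (w - 1) (k - 1)).ncard =
        if k = 0 then 0 else heightBinomialSum m (k - 1) := by
      rcases k with _ | k
      · rw [schPrefix_eq_empty_of_neg_height _ (by norm_num), Set.ncard_empty, if_pos rfl]
      · rw [if_neg k.succ_ne_zero, Nat.add_sub_cancel,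
          ← ih k (w := w - 1) (by push_cast at hw; omega)]
        push_cast
        rw [add_sub_cancel_right]
    have h1 := ih (k + 1) (w := w - 3) (by push_cast at hw ⊢; omega)
    have h2 := ih (k + 2) (w := w - 4) (by push_cast at hw ⊢; omega)
    push_cast at h1 h2
    rw [ncard_schPrefix (by positivity), if_neg (by omega), hu, ih k (by push_cast at hw; omega),
      h1, h2, heightBinomialSum_succ, zero_add]

theorem card_filter_fSteps_eq_north (H : ℕ) :
    ((fSteps H).filter (· = (0, 1))).card = H.choose 0 := by
  rw [filter_eq', if_pos (mem_fSteps.2 ⟨.inl rfl, by omega⟩)]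
  simp

theorem card_filter_fSteps_eq_one_one (H : ℕ) :
    ((fSteps H).filter (· = (1, 1))).card = H.choose 0 := by
  rw [filter_eq', if_pos (mem_fSteps.2 ⟨.inr ⟨le_rfl, le_rfl⟩, by simp⟩)]
  simp

theorem card_filter_fSteps_wideHigh (H : ℕ) :
    ((fSteps H).filter fun s => 2 ≤ s.1 ∧ s.2 = 1).card = H.choose 1 := by
  rw [show (fSteps H).filter _ = wideHighSteps H by
    ext s; simp only [mem_filter, mem_fSteps, mem_wideHighSteps, IsFStep, Prod.ext_iff]; omega]
  simpa using sum_wideHighSteps_choose H 0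

theorem card_filter_fSteps_narrowLow (H : ℕ) :
    ((fSteps H).filter fun s => s.1 = 1 ∧ s.2 ≤ 0).card = H.choose 1 := by
  rw [show (fSteps H).filter _ = narrowLowSteps H by
    ext s; simp only [mem_filter, mem_fSteps, mem_narrowLowSteps, IsFStep, Prod.ext_iff]; omega]
  simpa using sum_narrowLowSteps_choose H 0

theorem card_filter_fSteps_wideLow (H : ℕ) :
    ((fSteps H).filter fun s => 2 ≤ s.1 ∧ s.2 ≤ 0).card = H.choose 2 := by
  rw [show (fSteps H).filter _ = wideLowSteps H by
    ext s; simp only [mem_filter, mem_fSteps, mem_wideLowSteps, IsFStep, Prod.ext_iff]; omega]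
  simpa using sum_wideLowSteps_choose H 0

theorem ncard_fPaths_succ_filter {q : List (ℤ × ℤ) → Prop} {p : ℤ × ℤ → Prop} [DecidablePred p]
    (hq : ∀ Q s, q (Q ++ [s]) ↔ p s) {k : ℕ} (hp : ∀ H, ((fSteps H).filter p).card = H.choose k)
    (m : ℕ) : {Q ∈ FPaths (m + 1) | q Q}.ncard = heightBinomialSum m k := by
  classical
  have : {Q ∈ FPaths (m + 1) | q Q} = ↑((fPathFinset (m + 1)).filter q) := by
    ext; simp [← coe_fPathFinset]
  rw [this, Set.ncard_coe_finset, card_filter, sum_fPathFinset_succ]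
  simp only [hq, ← card_filter, hp]
  rfl

theorem schP_suffix_eq_image {b : List SStep} (hb : b ∈ lastBlocks) (n : ℕ) :
    {P ∈ SchP n | b <:+ P} = (· ++ b) '' SchPrefix (2 * n - sWidth b) (-sHeight b) := by
  ext P
  simp only [schP_eq_schPrefix, Set.mem_ofPred_eq, Set.mem_image]
  constructor
  · rintro ⟨hP, P', rfl⟩
    exact ⟨P', by simpa using ((append_mem_schPrefix_iff hb).1 hP).1, rfl⟩
  · rintro ⟨P', hP', rfl⟩
    exact ⟨(append_mem_schPrefix_iff hb).2 ⟨by simpa using hP', le_rfl⟩, P', rfl⟩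

theorem ncard_schP_suffix_eq {b : List SStep} (hb : b ∈ lastBlocks) {k : ℕ}
    (hbw : sWidth b = k + 2) (hbh : sHeight b = -k) {q : List (ℤ × ℤ) → Prop}
    {p : ℤ × ℤ → Prop} [DecidablePred p] (hq : ∀ Q s, q (Q ++ [s]) ↔ p s) (hq₀ : ¬ q [])
    (hp : ∀ H, ((fSteps H).filter p).card = H.choose k) (n : ℕ) :
    {P ∈ SchP n | b <:+ P}.ncard = {Q ∈ FPaths n | q Q}.ncard := by
  rw [schP_suffix_eq_image hb, Set.ncard_image_of_injective _ (List.append_left_injective b),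
    hbw, hbh, neg_neg]
  cases n with
  | zero =>
    have : {Q ∈ FPaths 0 | q Q} = ∅ := Set.eq_empty_of_forall_notMem fun Q ⟨⟨hQ, _⟩, hqQ⟩ =>
      hq₀ (List.length_eq_zero_iff.1 hQ ▸ hqQ)
    rw [schPrefix_eq_empty_of_neg_width (by omega), this, Set.ncard_empty, Set.ncard_empty]
  | succ m =>
    rw [ncard_fPaths_succ_filter hq hp,
      ncard_schPrefix_eq_heightBinomialSum m k (by push_cast; ring)]

theorem ncard_schP_eq_ncard_fPaths (n : ℕ) : (SchP n).ncard = (FPaths n).ncard := by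
  rw [schP_eq_schPrefix, ← Nat.cast_zero, ncard_schPrefix_eq_heightBinomialSum n 0 (by simp),
    heightBinomialSum, ← coe_fPathFinset, Set.ncard_coe_finset, card_eq_sum_ones]
  simp

/-- Theorem 2.3: counts of Schröder paths without triple descents by their final letters
match counts of `F`-paths by their last step; consequently `|S_n| = |F_n|`. -/
theorem schroeder_Fpath_counts (n : ℕ) :
    ({P ∈ SchP n | [SStep.h] <:+ P}).ncard =
      ({Q ∈ FPaths n | Q.getLast? = some (0, 1)}).ncard ∧
    ({P ∈ SchP n | [SStep.u, SStep.d] <:+ P}).ncard =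
      ({Q ∈ FPaths n | Q.getLast? = some (1, 1)}).ncard ∧
    ({P ∈ SchP n | [SStep.h, SStep.d] <:+ P}).ncard =
      ({Q ∈ FPaths n | ∃ a : ℤ, 2 ≤ a ∧ Q.getLast? = some (a, 1)}).ncard ∧
    ({P ∈ SchP n | [SStep.u, SStep.d, SStep.d] <:+ P}).ncard =
      ({Q ∈ FPaths n | ∃ b : ℤ, b ≤ 0 ∧ Q.getLast? = some (1, b)}).ncard ∧
    ({P ∈ SchP n | [SStep.h, SStep.d, SStep.d] <:+ P}).ncard =
      ({Q ∈ FPaths n | ∃ a b : ℤ, 2 ≤ a ∧ b ≤ 0 ∧ Q.getLast? = some (a, b)}).ncard ∧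
    (SchP n).ncard = (FPaths n).ncard :=
  ⟨ncard_schP_suffix_eq (by decide) (k := 0) (by decide) (by decide) (by simp) (by simp)
      card_filter_fSteps_eq_north n,
    ncard_schP_suffix_eq (by decide) (k := 0) (by decide) (by decide) (by simp) (by simp)
      card_filter_fSteps_eq_one_one n,
    ncard_schP_suffix_eq (by decide) (k := 1) (by decide) (by decide) (by simp [Prod.ext_iff])
      (by simp) card_filter_fSteps_wideHigh n,
    ncard_schP_suffix_eq (by decide) (k := 1) (by decide) (by decide)
      (by simp [Prod.ext_iff, and_comm]) (by simp) card_filter_fSteps_narrowLow n,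
    ncard_schP_suffix_eq (by decide) (k := 2) (by decide) (by decide) (by simp [Prod.ext_iff])
      (by simp) card_filter_fSteps_wideLow n,
    ncard_schP_eq_ncard_fPaths n⟩
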